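/- arXiv:2510.02230 — 2 statements merged into one kernel-verified Lean document; each statement's English description precedes it below -/
import Mathlib

section
/- Let V ≥ 2, z : Fin V → ℝ, y⁻ ∈ Fin V, η' > 0, and π = σ(z). Define the negative-gradient REINFORCE-updated logits z'_j = z_j + η'·π_{y⁻}·π_j for j ≠ y⁻ and z'_{y⁻} = z_{y⁻} − η'·π_{y⁻}·(1 − π_{y⁻}), and let π' = σ(z'). Then π'_{y⁻} < π_{y⁻}: the probability of the penalized action strictly decreases. -/
/-! Softmax is invariant under adding a constant to all logits, so `σ(z')_y < σ(z)_y` as soon as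
the logit `y` moves least: `z'_y - z_y ≤ z'_j - z_j` for every `j`, strictly for some `j`.
The negative-gradient step lowers `z_{y⁻}` and raises every other logit by `η'·π_{y⁻}·π_j > 0`,
and `V ≥ 2` provides some `j ≠ y⁻`. -/

/-- The softmax distribution `σ(z)_i = exp(z_i) / ∑_j exp(z_j)`. -/
noncomputable def softmax {V : ℕ} (z : Fin V → ℝ) (i : Fin V) : ℝ :=
  Real.exp (z i) / ∑ j, Real.exp (z j)

open Finset

theorem sum_exp_pos {V : ℕ} (z : Fin V → ℝ) (i : Fin V) : 0 < ∑ j, Real.exp (z j) :=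
  sum_pos (fun j _ => Real.exp_pos (z j)) ⟨i, mem_univ i⟩

theorem softmax_pos {V : ℕ} (z : Fin V → ℝ) (i : Fin V) : 0 < softmax z i :=
  div_pos (Real.exp_pos (z i)) (sum_exp_pos z i)

theorem softmax_le_one {V : ℕ} (z : Fin V → ℝ) (i : Fin V) : softmax z i ≤ 1 :=
  (div_le_one (sum_exp_pos z i)).2 <|
    single_le_sum (fun j _ => (Real.exp_pos (z j)).le) (mem_univ i)

theorem softmax_lt_softmax_of_sub_le_sub {V : ℕ} {z z' : Fin V → ℝ} {y : Fin V}
    (hle : ∀ j, z' y - z y ≤ z' j - z j) (hlt : ∃ j, z' y - z y < z' j - z j) :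
    softmax z' y < softmax z y := by
  unfold softmax
  rw [div_lt_div_iff₀ (sum_exp_pos z' y) (sum_exp_pos z y), mul_sum, mul_sum]
  obtain ⟨k, hk⟩ := hlt
  refine sum_lt_sum (fun j _ => ?_) ⟨k, mem_univ k, ?_⟩
  · rw [← Real.exp_add, ← Real.exp_add, Real.exp_le_exp]
    linarith [hle j]
  · rw [← Real.exp_add, ← Real.exp_add, Real.exp_lt_exp]
    linarith

/-- Negative-gradient REINFORCE update on a penalized action `y⁻`:
`z'_j = z_j + η'·π_{y⁻}·π_j` for `j ≠ y⁻` and `z'_{y⁻} = z_{y⁻} − η'·π_{y⁻}·(1 − π_{y⁻})`.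
Then the probability of the penalized action strictly decreases: `π'_{y⁻} < π_{y⁻}`. -/
theorem negative_gradient_decreases_penalized {V : ℕ} (hV : 2 ≤ V)
    (z : Fin V → ℝ) (yneg : Fin V) (η' : ℝ) (hη : 0 < η') :
    let π := softmax z
    let z' : Fin V → ℝ := fun j =>
      if j = yneg then z yneg - η' * (π yneg * (1 - π yneg))
      else z j + η' * (π yneg * π j)
    softmax z' yneg < softmax z yneg := by
  intro π z'
  have hdown : z' yneg - z yneg ≤ 0 := by
    have := mul_nonneg hη.le
      (mul_nonneg (softmax_pos z yneg).le (sub_nonneg.2 (softmax_le_one z yneg)))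
    simp only [z', if_pos rfl]
    linarith
  have hup : ∀ j, j ≠ yneg → 0 < z' j - z j := by
    intro j hj
    have := mul_pos hη (mul_pos (softmax_pos z yneg) (softmax_pos z j))
    simp only [z', if_neg hj]
    linarith
  obtain ⟨k, hk⟩ := Fintype.exists_ne_of_one_lt_card (by rwa [Fintype.card_fin]) yneg
  refine softmax_lt_softmax_of_sub_le_sub (fun j => ?_) ⟨k, hdown.trans_lt (hup k hk)⟩
  by_cases hj : j = yneg
  · rw [hj]
  · exact hdown.trans (hup j hj).le
end

section
/- Let V ≥ 3, z : Fin V → ℝ, y⁻ ∈ Fin V, η' > 0, and π = σ(z). Define the negative-gradient REINFORCE-updated logits z'_j = z_j + η'·π_{y⁻}·π_j for j ≠ y⁻ and z'_{y⁻} = z_{y⁻} − η'·π_{y⁻}·(1 − π_{y⁻}), and let π' = σ(z'). Then for all j, k ≠ y⁻ with π_j > π_k, we have π'_j / π'_k > π_j / π_k: among the non-penalized actions, the negative gradient strictly amplifies the higher-likelihood action relative to lower-likelihood ones, regardless of correctness. -/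
lemma softmax_ratio {V : ℕ} [NeZero V] (z : Fin V → ℝ) (j k : Fin V) :
    softmax z j / softmax z k = Real.exp (z j) / Real.exp (z k) := by
  have hS : (0:ℝ) < ∑ i, Real.exp (z i) :=
    Finset.sum_pos (fun i _ => Real.exp_pos _) ⟨⟨0, Nat.pos_of_ne_zero (NeZero.ne V)⟩,
      Finset.mem_univ _⟩
  simp only [softmax]
  field_simp

/-- Negative gradients reinforce high-likelihood actions: after the negative-gradient
REINFORCE update on a penalized action `y⁻`, for all non-penalized actions `j, k` with
`π_j > π_k`, the ratio strictly grows: `π'_j / π'_k > π_j / π_k`. -/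
theorem negative_gradient_amplifies_dominant {V : ℕ} (hV : 3 ≤ V)
    (z : Fin V → ℝ) (yneg : Fin V) (η' : ℝ) (hη : 0 < η') :
    let π := softmax z
    let z' : Fin V → ℝ := fun j =>
      if j = yneg then z yneg - η' * (π yneg * (1 - π yneg))
      else z j + η' * (π yneg * π j)
    ∀ j k : Fin V, j ≠ yneg → k ≠ yneg → softmax z k < softmax z j →
      softmax z j / softmax z k < softmax z' j / softmax z' k := by
  intro π z' j k hj hk hlt
  haveI : NeZero V := ⟨by omega⟩
  have hS : (0:ℝ) < ∑ i, Real.exp (z i) :=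
    Finset.sum_pos (fun i _ => Real.exp_pos _) ⟨⟨0, by omega⟩, Finset.mem_univ _⟩
  have hπy : 0 < π yneg := div_pos (Real.exp_pos _) hS
  have hπjk : π k < π j := hlt
  rw [softmax_ratio, softmax_ratio]
  rw [← Real.exp_sub, ← Real.exp_sub, Real.exp_lt_exp]
  have hz'j : z' j = z j + η' * (π yneg * π j) := by simp [z', hj]
  have hz'k : z' k = z k + η' * (π yneg * π k) := by simp [z', hk]
  rw [hz'j, hz'k]
  nlinarith [mul_pos hη (mul_pos hπy (sub_pos.mpr hπjk))]
end
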